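/- The nonzero Lie ideals of W(Γ) are exactly the subspaces W^n for n ∈ ℤ≥0; that is, each W^n is an ideal of W(Γ), and every nonzero ideal of W(Γ) equals W^n for some n ∈ ℤ≥0. -/

import Mathlib

/-!
A nonzero ideal `I` contains a basis vector. Bracketing `x ∈ I` with `L_{g,n}`, where `n` is a
level occurring in the grade-`g` component of `x`, shifts every grade by `g`; the grade-`g`
component becomes a grade-`2g` component with the level `n` removed (its coefficient is `j - n`),
while any other grade `α` survives (its lowest coefficient gets multiplied by `α - g`). So either
some grade loses a level or, once that grade has a single level, the number of grades drops, and
the descent ends at a multiple of a basis vector.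

From `L_{γ,N} ∈ I`, the brackets `⁅L_{δ-γ,N}, L_{γ,N}⁆ = (2γ - δ) L_{δ,2N}` put `L_{δ,2N}` in `I`
for `δ ≠ 2γ`, and the difference of two brackets with the same target `L_{ε,2N+j}` isolates that
vector, so `W^{2N} ⊆ I`.

Let `n` be the lowest level occurring in `I`, so that `I ⊆ W^n`. Modulo `W^{n+1}`, bracketing
with `L_{β,0}` acts on level `n` by `L_{α,n} ↦ (α - β) L_{α+β,n}`; this kills one grade at a
time and leaves a single `L_{δ,n}` in `I + W^{n+1}`. Brackets with `L_{β,j}` then give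
`L_{γ,n+k} ∈ I + W^{n+k+1}` for all `γ, k`, and descending from `W^{2N} ⊆ I` one level at a time
yields `W^n ⊆ I`.
-/

/-- `Wn Γ W B n` is the subspace `W^n`, the span of `{L_{α,i} : α ∈ Γ, i ≥ n}`. -/
noncomputable def Wn (Γ : AddSubgroup ℂ) (W : Type) [LieRing W] [LieAlgebra ℂ W]
    (B : Module.Basis (Γ × ℕ) ℂ W) (n : ℕ) : Submodule ℂ W :=
  Submodule.span ℂ {x : W | ∃ (α : Γ) (i : ℕ), n ≤ i ∧ x = B (α, i)}

open Finset

section TorsionFree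

variable {G : Type*} [AddCommGroup G] [IsAddTorsionFree G] [Nontrivial G]

theorem exists_ne_and_ne (a b : G) : ∃ c, c ≠ a ∧ c ≠ b := by
  obtain ⟨t, ht⟩ := exists_ne (0 : G)
  by_cases h : a + t = b
  · exact ⟨a + t + t, by grind, by grind⟩
  · exact ⟨a + t, by grind, h⟩

theorem exists_ne_and_add_self_ne (a b : G) : ∃ c, c ≠ a ∧ c + c ≠ b := by
  obtain ⟨t, ht⟩ := exists_ne (0 : G)
  by_cases h : (a + t) + (a + t) = b
  · exact ⟨a - t, by grind, by grind⟩
  · exact ⟨a + t, by grind, h⟩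

end TorsionFree

section Basis

variable {Γ : AddSubgroup ℂ} {W : Type} [LieRing W] [LieAlgebra ℂ W]

def IsWBasis (B : Module.Basis (Γ × ℕ) ℂ W) : Prop :=
  ∀ (α β : Γ) (i j : ℕ), ⁅B (α, i), B (β, j)⁆ =
    ((β : ℂ) - (α : ℂ)) • B (α + β, i + j) + ((j : ℂ) - (i : ℂ)) • B (α + β, i + j + 1)

variable (B : Module.Basis (Γ × ℕ) ℂ W)

noncomputable def gradeSupport (x : W) : Finset Γ := (B.repr x).curry.support

noncomputable def levelSupport (x : W) (g : Γ) : Finset ℕ := ((B.repr x).curry g).support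

noncomputable def gradeSupportAt (x : W) (n : ℕ) : Finset Γ :=
  (B.repr x).support.preimage (·, n) (Prod.mk_left_injective n).injOn

variable {B}

@[simp]
theorem mem_levelSupport {x : W} {g : Γ} {i : ℕ} :
    i ∈ levelSupport B x g ↔ B.repr x (g, i) ≠ 0 := by
  simp [levelSupport]

theorem mem_gradeSupport {x : W} {g : Γ} :
    g ∈ gradeSupport B x ↔ (levelSupport B x g).Nonempty := by
  simp [gradeSupport, levelSupport, Finsupp.support_nonempty_iff, Finsupp.ne_iff]

@[simp]
theorem mem_gradeSupportAt {x : W} {n : ℕ} {α : Γ} :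
    α ∈ gradeSupportAt B x n ↔ B.repr x (α, n) ≠ 0 := by
  simp [gradeSupportAt]

theorem mem_Wn_iff {n : ℕ} {x : W} : x ∈ Wn Γ W B n ↔ ∀ p ∈ (B.repr x).support, n ≤ p.2 := by
  have : {x : W | ∃ (α : Γ) (i : ℕ), n ≤ i ∧ x = B (α, i)} = B '' {p | n ≤ p.2} := by
    ext x
    simp [eq_comm]
  rw [Wn, this, B.mem_span_image]
  rfl

theorem basis_mem_Wn {n i : ℕ} (α : Γ) (h : n ≤ i) : B (α, i) ∈ Wn Γ W B n :=
  Submodule.subset_span ⟨α, i, h, rfl⟩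

theorem Wn_antitone : Antitone (Wn Γ W B) := fun _ _ h =>
  Submodule.span_mono fun _ ⟨α, i, hi, hx⟩ => ⟨α, i, h.trans hi, hx⟩

theorem Wn_le_sup_Wn_succ {S : Submodule ℂ W} {m : ℕ}
    (h : ∀ γ, B (γ, m) ∈ S ⊔ Wn Γ W B (m + 1)) : Wn Γ W B m ≤ S ⊔ Wn Γ W B (m + 1) := by
  refine Submodule.span_le.2 ?_
  rintro _ ⟨γ, i, hi, rfl⟩
  rcases hi.eq_or_lt with rfl | hlt
  · exact h γ
  · exact Submodule.mem_sup_right (basis_mem_Wn γ hlt)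

theorem Wn_le_of_forall_basis_mem_sup {S : Submodule ℂ W} {n M : ℕ}
    (h : ∀ γ k, B (γ, n + k) ∈ S ⊔ Wn Γ W B (n + k + 1)) (hM : Wn Γ W B M ≤ S) :
    Wn Γ W B n ≤ S := by
  suffices ∀ d k, M ≤ n + k + d → Wn Γ W B (n + k) ≤ S from this M 0 (by omega)
  intro d
  induction d with
  | zero => exact fun k hk => (Wn_antitone hk).trans hM
  | succ d ih =>
    intro k hk
    calc Wn Γ W B (n + k) ≤ S ⊔ Wn Γ W B (n + k + 1) := Wn_le_sup_Wn_succ (h · k)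
      _ ≤ S := sup_le le_rfl (ih (k + 1) (by omega))

theorem sub_smul_basis_mem_Wn_succ {x : W} {n : ℕ} {α : Γ} (hx : x ∈ Wn Γ W B n)
    (h : gradeSupportAt B x n ⊆ {α}) :
    x - B.repr x (α, n) • B (α, n) ∈ Wn Γ W B (n + 1) := by
  rw [mem_Wn_iff] at hx ⊢
  rintro ⟨β, i⟩ hp
  rw [Finsupp.mem_support_iff, map_sub, map_smul, B.repr_self, Finsupp.sub_apply,
    Finsupp.smul_apply, Finsupp.single_apply, smul_eq_mul] at hp
  by_cases hβi : (α, n) = (β, i)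
  · rw [if_pos hβi, ← hβi, mul_one, sub_self] at hp
    exact absurd rfl hp
  · rw [if_neg hβi, mul_zero, sub_zero] at hp
    refine (hx _ (Finsupp.mem_support_iff.2 hp)).lt_of_ne fun hni => hβi ?_
    subst hni
    rw [mem_singleton.1 (h (mem_gradeSupportAt.2 hp))]

theorem eq_smul_basis_of_subset {x : W} {g : Γ} {n : ℕ} (hg : gradeSupport B x ⊆ {g})
    (hn : levelSupport B x g ⊆ {n}) : x = B.repr x (g, n) • B (g, n) := by
  apply B.repr.injective
  ext ⟨α, i⟩
  rw [map_smul, B.repr_self, Finsupp.smul_apply, Finsupp.single_apply, smul_eq_mul]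
  split_ifs with h
  · rw [← h, mul_one]
  · rw [mul_zero]
    by_contra hx
    obtain rfl : α = g := mem_singleton.1 (hg (mem_gradeSupport.2 ⟨i, mem_levelSupport.2 hx⟩))
    obtain rfl : i = n := mem_singleton.1 (hn (mem_levelSupport.2 hx))
    exact h rfl

end Basis

namespace IsWBasis

variable {Γ : AddSubgroup ℂ} {W : Type} [LieRing W] [LieAlgebra ℂ W]
  {B : Module.Basis (Γ × ℕ) ℂ W}

theorem lie_basis_mem_Wn (hB : IsWBasis B) (β : Γ) (j : ℕ) {m : ℕ} {w : W}
    (hw : w ∈ Wn Γ W B m) : ⁅B (β, j), w⁆ ∈ Wn Γ W B (m + j) := by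
  suffices Wn Γ W B m ≤ (Wn Γ W B (m + j)).comap (LieAlgebra.ad ℂ W (B (β, j))) from this hw
  refine Submodule.span_le.2 ?_
  rintro _ ⟨α, i, hi, rfl⟩
  simp only [SetLike.mem_coe, Submodule.mem_comap, LieAlgebra.ad_apply, hB β α j i]
  exact add_mem (Submodule.smul_mem _ _ (basis_mem_Wn _ (by omega)))
    (Submodule.smul_mem _ _ (basis_mem_Wn _ (by omega)))

theorem lie_mem_Wn (hB : IsWBasis B) (x : W) {m : ℕ} {w : W} (hw : w ∈ Wn Γ W B m) :
    ⁅x, w⁆ ∈ Wn Γ W B m := by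
  rw [← B.linearCombination_repr x, Finsupp.linearCombination_apply, Finsupp.sum, sum_lie]
  refine Submodule.sum_mem _ fun p _ => ?_
  rw [smul_lie]
  exact Submodule.smul_mem _ _
    (Wn_antitone (Nat.le_add_right m p.2) (hB.lie_basis_mem_Wn p.1 p.2 hw))

theorem repr_lie_basis_apply (hB : IsWBasis B) (g α : Γ) (n k : ℕ) (x : W) :
    B.repr ⁅B (g, n), x⁆ (g + α, k) =
      ((α : ℂ) - g) * (if n ≤ k then B.repr x (α, k - n) else 0) +
      ((k : ℂ) - 2 * n - 1) * (if n + 1 ≤ k then B.repr x (α, k - n - 1) else 0) := by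
  rw [← B.linearCombination_repr x]
  induction B.repr x using Finsupp.induction_linear with
  | zero => simp
  | add f f' hf hf' =>
    simp only [map_add, lie_add, Finsupp.add_apply] at hf hf' ⊢
    rw [hf, hf']
    split_ifs <;> ring
  | single p a =>
    obtain ⟨β, i⟩ := p
    simp only [Finsupp.linearCombination_single, lie_smul, hB g β, map_add, map_smul,
      Module.Basis.repr_self, Finsupp.smul_apply, Finsupp.add_apply, Finsupp.single_apply,
      Prod.mk.injEq, add_right_inj, smul_eq_mul]
    by_cases hβ : β = α
    · subst hβ
      obtain rfl | rfl | hk : k = n + i ∨ k = n + i + 1 ∨ (k ≠ n + i ∧ k ≠ n + i + 1) := by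
        omega
      all_goals simp only [true_and]; split_ifs <;> first | omega | (push_cast; ring)
    · simp [hβ]

theorem repr_lie_basis_add_add (hB : IsWBasis B) {g α : Γ} {n l : ℕ} {x : W}
    (hl : ∀ i < l, B.repr x (α, i) = 0) :
    B.repr ⁅B (g, n), x⁆ (g + α, n + l) = ((α : ℂ) - g) * B.repr x (α, l) := by
  rw [hB.repr_lie_basis_apply, if_pos (by omega), Nat.add_sub_cancel_left]
  split_ifs
  · rw [hl (l - 1) (by omega), mul_zero, add_zero]
  · rw [mul_zero, add_zero]

theorem gradeSupport_lie_subset (hB : IsWBasis B) (g : Γ) (n : ℕ) (x : W) :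
    gradeSupport B ⁅B (g, n), x⁆ ⊆ (gradeSupport B x).map (addLeftEmbedding g) := by
  intro δ hδ
  obtain ⟨α, rfl⟩ : ∃ α, δ = g + α := ⟨δ - g, by abel⟩
  refine mem_map_of_mem _ ?_
  obtain ⟨k, hk⟩ := mem_gradeSupport.1 hδ
  rw [mem_levelSupport, hB.repr_lie_basis_apply] at hk
  by_contra hα
  have hzero : ∀ i, B.repr x (α, i) = 0 := fun i => by_contra fun h =>
    hα (mem_gradeSupport.2 ⟨i, mem_levelSupport.2 h⟩)
  simp [hzero] at hk

theorem levelSupport_lie_add_self (hB : IsWBasis B) (g : Γ) (n : ℕ) (x : W) :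
    levelSupport B ⁅B (g, n), x⁆ (g + g) =
      ((levelSupport B x g).erase n).map (addRightEmbedding (n + 1)) := by
  ext k
  simp only [mem_levelSupport, hB.repr_lie_basis_apply, sub_self, zero_mul, zero_add,
    mem_map, mem_erase, addRightEmbedding_apply]
  constructor
  · intro hk
    have hnk : n + 1 ≤ k := by by_contra h; simp [h] at hk
    rw [if_pos hnk] at hk
    refine ⟨k - n - 1, ⟨fun h => ?_, right_ne_zero_of_mul hk⟩, by omega⟩
    obtain rfl : k = 2 * n + 1 := by omega
    simp at hk
  · rintro ⟨i, ⟨hin, hi⟩, rfl⟩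
    rw [if_pos (by omega), show i + (n + 1) - n - 1 = i by omega]
    refine mul_ne_zero (fun h => hin ?_) hi
    have : (i : ℂ) = n := by push_cast at h; linear_combination h
    exact_mod_cast this

theorem card_gradeSupport_lie_le (hB : IsWBasis B) (g : Γ) (n : ℕ) (x : W) :
    #(gradeSupport B ⁅B (g, n), x⁆) ≤ #(gradeSupport B x) :=
  (card_le_card (hB.gradeSupport_lie_subset g n x)).trans_eq (card_map _)

theorem card_levelSupport_lie_add_self (hB : IsWBasis B) {x : W} {g : Γ} {n : ℕ}
    (hn : n ∈ levelSupport B x g) :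
    #(levelSupport B ⁅B (g, n), x⁆ (g + g)) = #(levelSupport B x g) - 1 := by
  rw [hB.levelSupport_lie_add_self, card_map, card_erase_of_mem hn]

theorem card_gradeSupport_lie_lt (hB : IsWBasis B) {x : W} {g : Γ} {n : ℕ}
    (hg : g ∈ gradeSupport B x) (hn : levelSupport B x g = {n}) :
    #(gradeSupport B ⁅B (g, n), x⁆) < #(gradeSupport B x) := by
  have hgg : g + g ∉ gradeSupport B ⁅B (g, n), x⁆ := by
    simp [mem_gradeSupport, hB.levelSupport_lie_add_self, hn]
  have hsub : gradeSupport B ⁅B (g, n), x⁆ ⊆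
      ((gradeSupport B x).map (addLeftEmbedding g)).erase (g + g) := fun δ hδ =>
    mem_erase.2 ⟨ne_of_mem_of_not_mem hδ hgg, hB.gradeSupport_lie_subset g n x hδ⟩
  calc #(gradeSupport B ⁅B (g, n), x⁆)
      ≤ #(((gradeSupport B x).map (addLeftEmbedding g)).erase (g + g)) := card_le_card hsub
    _ < #((gradeSupport B x).map (addLeftEmbedding g)) :=
      card_erase_lt_of_mem (mem_map_of_mem (addLeftEmbedding g) hg)
    _ = #(gradeSupport B x) := card_map _

theorem add_mem_gradeSupport_lie (hB : IsWBasis B) {x : W} {g α : Γ}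
    (hα : α ∈ gradeSupport B x) (hαg : α ≠ g) (n : ℕ) :
    g + α ∈ gradeSupport B ⁅B (g, n), x⁆ := by
  let l := (levelSupport B x α).min' (mem_gradeSupport.1 hα)
  have hl : B.repr x (α, l) ≠ 0 := mem_levelSupport.1 (min'_mem _ _)
  have hlow : ∀ i < l, B.repr x (α, i) = 0 := fun i hi => by
    by_contra h
    exact (min'_le _ i (mem_levelSupport.2 h)).not_gt hi
  refine mem_gradeSupport.2 ⟨n + l, mem_levelSupport.2 ?_⟩
  rw [hB.repr_lie_basis_add_add hlow]
  exact mul_ne_zero (sub_ne_zero.2 (Subtype.coe_injective.ne hαg)) hl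

theorem exists_basis_mem_of_mem (hB : IsWBasis B) (I : LieIdeal ℂ W) {x : W} (hx : x ∈ I)
    {g : Γ} (hg : g ∈ gradeSupport B x) : ∃ γ N, B (γ, N) ∈ I := by
  obtain ⟨n, hn⟩ := mem_gradeSupport.1 hg
  have hy : ⁅B (g, n), x⁆ ∈ I := I.lie_mem hx
  by_cases hlev : 1 < #(levelSupport B x g)
  · have hcard := hB.card_levelSupport_lie_add_self hn
    have hle := hB.card_gradeSupport_lie_le g n x
    have hgg : g + g ∈ gradeSupport B ⁅B (g, n), x⁆ :=
      mem_gradeSupport.2 (card_pos.1 (by omega))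
    exact hB.exists_basis_mem_of_mem I hy hgg
  have hn1 : levelSupport B x g = {n} :=
    eq_singleton_iff_unique_mem.2 ⟨hn, fun i hi => card_le_one.1 (by omega) i hi n hn⟩
  by_cases hgr : gradeSupport B x ⊆ {g}
  · refine ⟨g, n, (Submodule.smul_mem_iff (I : Submodule ℂ W) (mem_levelSupport.1 hn)).1 ?_⟩
    rw [← eq_smul_basis_of_subset hgr hn1.subset]
    exact hx
  · obtain ⟨α, hα, hαg⟩ := not_subset.1 hgr
    have hlt := hB.card_gradeSupport_lie_lt hg hn1
    exact hB.exists_basis_mem_of_mem I hy (hB.add_mem_gradeSupport_lie hα (by simpa using hαg) n)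
termination_by (#(gradeSupport B x), #(levelSupport B x g))
decreasing_by
  · exact Prod.Lex.right' _ hle (by omega)
  · exact Prod.Lex.left _ _ hlt

theorem exists_basis_mem (hB : IsWBasis B) {I : LieIdeal ℂ W} (hI : I ≠ ⊥) :
    ∃ γ N, B (γ, N) ∈ I := by
  obtain ⟨x, hxI, hx⟩ : ∃ x ∈ I, x ≠ 0 := by
    by_contra! h
    exact hI ((LieSubmodule.eq_bot_iff I).2 h)
  obtain ⟨⟨g, i⟩, hgi⟩ := Finsupp.ne_iff.1 ((B.repr.map_ne_zero_iff).2 hx)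
  exact hB.exists_basis_mem_of_mem I hxI (mem_gradeSupport.2 ⟨i, mem_levelSupport.2 hgi⟩)

theorem basis_mem_of_basis_mem_of_ne (hB : IsWBasis B) (I : LieIdeal ℂ W) {δ₁ δ₂ : Γ} {m : ℕ}
    (h₁ : B (δ₁, m) ∈ I) (h₂ : B (δ₂, m) ∈ I) (hne : δ₁ ≠ δ₂) (ε : Γ) (j : ℕ) :
    B (ε, m + j) ∈ I := by
  have hlie : ∀ δ : Γ, ⁅B (ε - δ, j), B (δ, m)⁆ =
      ((δ : ℂ) - (ε - δ : Γ)) • B (ε, m + j) + ((m : ℂ) - j) • B (ε, m + j + 1) := by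
    intro δ
    rw [hB, sub_add_cancel, add_comm j m]
  -- the `B (ε, m + j + 1)` terms of the two brackets cancel
  have hdiff : (2 * ((δ₁ : ℂ) - δ₂)) • B (ε, m + j) =
      ⁅B (ε - δ₁, j), B (δ₁, m)⁆ - ⁅B (ε - δ₂, j), B (δ₂, m)⁆ := by
    rw [hlie, hlie]
    push_cast
    module
  refine (Submodule.smul_mem_iff (I : Submodule ℂ W)
    (mul_ne_zero two_ne_zero (sub_ne_zero.2 (Subtype.coe_injective.ne hne)))).1 ?_
  rw [hdiff]
  exact I.sub_mem (I.lie_mem h₁) (I.lie_mem h₂)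

theorem Wn_le_of_basis_mem (hB : IsWBasis B) [Nontrivial Γ] (I : LieIdeal ℂ W) {γ : Γ} {N : ℕ}
    (h : B (γ, N) ∈ I) : Wn Γ W B (N + N) ≤ I := by
  have hlevel : ∀ δ ≠ γ + γ, B (δ, N + N) ∈ I := by
    intro δ hδ
    have := I.lie_mem (x := B (δ - γ, N)) h
    rw [hB, sub_add_cancel, sub_self, zero_smul, add_zero] at this
    exact (Submodule.smul_mem_iff (I : Submodule ℂ W)
      (sub_ne_zero.2 (Subtype.coe_injective.ne (by grind)))).1 this
  obtain ⟨δ₁, h₁, -⟩ := exists_ne_and_ne (γ + γ) (γ + γ)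
  obtain ⟨δ₂, h₂, h₁₂⟩ := exists_ne_and_ne (γ + γ) δ₁
  refine Submodule.span_le.2 ?_
  rintro _ ⟨ε, i, hi, rfl⟩
  obtain ⟨j, rfl⟩ := Nat.exists_eq_add_of_le hi
  exact hB.basis_mem_of_basis_mem_of_ne I (hlevel δ₂ h₂) (hlevel δ₁ h₁) h₁₂ ε j

theorem gradeSupportAt_lie_basis_zero (hB : IsWBasis B) {x : W} {n : ℕ}
    (hx : x ∈ Wn Γ W B n) (g : Γ) :
    gradeSupportAt B ⁅B (g, 0), x⁆ n =
      ((gradeSupportAt B x n).erase g).map (addLeftEmbedding g) := by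
  ext δ
  obtain ⟨α, rfl⟩ : ∃ α, δ = g + α := ⟨δ - g, by abel⟩
  have hlow : ∀ i < n, B.repr x (α, i) = 0 := fun i hi => by
    by_contra h
    exact (mem_Wn_iff.1 hx (α, i) (Finsupp.mem_support_iff.2 h)).not_gt hi
  have hcoeff := hB.repr_lie_basis_add_add (g := g) (n := 0) hlow
  rw [zero_add] at hcoeff
  rw [mem_gradeSupportAt, hcoeff, ← addLeftEmbedding_apply, mem_map', mem_erase,
    mem_gradeSupportAt, mul_ne_zero_iff, sub_ne_zero, ne_eq, Subtype.coe_inj]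

theorem exists_basis_mem_sup_Wn (hB : IsWBasis B) (I : LieIdeal ℂ W) {n : ℕ} {x : W}
    (hxI : x ∈ I) (hxW : x ∈ Wn Γ W B n) {α : Γ} (hα : α ∈ gradeSupportAt B x n) :
    ∃ δ, B (δ, n) ∈ (I : Submodule ℂ W) ⊔ Wn Γ W B (n + 1) := by
  by_cases hsub : gradeSupportAt B x n ⊆ {α}
  · refine ⟨α, (Submodule.smul_mem_iff _ (mem_gradeSupportAt.1 hα)).1 ?_⟩
    rw [← sub_sub_cancel x (B.repr x (α, n) • B (α, n))]
    exact Submodule.sub_mem _ (Submodule.mem_sup_left hxI)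
      (Submodule.mem_sup_right (sub_smul_basis_mem_Wn_succ hxW hsub))
  · obtain ⟨β, hβ, hβα⟩ := not_subset.1 hsub
    have hsupp := hB.gradeSupportAt_lie_basis_zero hxW α
    have hlt : #(gradeSupportAt B ⁅B (α, 0), x⁆ n) < #(gradeSupportAt B x n) := by
      rw [hsupp, card_map]
      exact card_erase_lt_of_mem hα
    have hmem : α + β ∈ gradeSupportAt B ⁅B (α, 0), x⁆ n := by
      rw [hsupp]
      exact mem_map_of_mem _ (mem_erase.2 ⟨by simpa using hβα, hβ⟩)
    exact hB.exists_basis_mem_sup_Wn I (I.lie_mem hxI) (hB.lie_mem_Wn _ hxW) hmem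
termination_by #(gradeSupportAt B x n)

theorem basis_add_mem_sup_Wn (hB : IsWBasis B) (I : LieIdeal ℂ W) {δ : Γ} {m : ℕ}
    (h : B (δ, m) ∈ (I : Submodule ℂ W) ⊔ Wn Γ W B (m + 1)) {β : Γ} (hβ : β ≠ δ) (j : ℕ) :
    B (β + δ, m + j) ∈ (I : Submodule ℂ W) ⊔ Wn Γ W B (m + j + 1) := by
  obtain ⟨u, hu, w, hw, huw⟩ := Submodule.mem_sup.1 h
  have hlie : ⁅B (β, j), B (δ, m)⁆ ∈ (I : Submodule ℂ W) ⊔ Wn Γ W B (m + j + 1) := by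
    rw [← huw, lie_add, Nat.add_right_comm]
    exact Submodule.add_mem_sup (I.lie_mem hu) (hB.lie_basis_mem_Wn β j hw)
  rw [hB, add_comm j m] at hlie
  have htail : ((m : ℂ) - j) • B (β + δ, m + j + 1) ∈
      (I : Submodule ℂ W) ⊔ Wn Γ W B (m + j + 1) :=
    Submodule.mem_sup_right (Submodule.smul_mem _ _ (basis_mem_Wn _ le_rfl))
  have := Submodule.sub_mem _ hlie htail
  rw [add_sub_cancel_right] at this
  exact (Submodule.smul_mem_iff _ (sub_ne_zero.2 (Subtype.coe_injective.ne hβ.symm))).1 this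

theorem basis_mem_sup_Wn_of_basis_mem_sup (hB : IsWBasis B) [Nontrivial Γ] (I : LieIdeal ℂ W)
    {δ : Γ} {n : ℕ} (h : B (δ, n) ∈ (I : Submodule ℂ W) ⊔ Wn Γ W B (n + 1)) (γ : Γ) (k : ℕ) :
    B (γ, n + k) ∈ (I : Submodule ℂ W) ⊔ Wn Γ W B (n + k + 1) := by
  obtain ⟨c, hc, hcc⟩ := exists_ne_and_add_self_ne (δ + δ) γ
  have hc' := hB.basis_add_mem_sup_Wn I h (β := c - δ) (by grind) 0
  rw [sub_add_cancel, add_zero] at hc'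
  have := hB.basis_add_mem_sup_Wn I hc' (β := γ - c) (by grind) k
  rwa [sub_add_cancel] at this

end IsWBasis

theorem stmt3 (Γ : AddSubgroup ℂ) (hΓ : Γ ≠ ⊥)
    (W : Type) [LieRing W] [LieAlgebra ℂ W] (B : Module.Basis (Γ × ℕ) ℂ W)
    (hB : ∀ (α β : Γ) (i j : ℕ),
      ⁅B (α, i), B (β, j)⁆ = ((β : ℂ) - (α : ℂ)) • B (α + β, i + j)
        + ((j : ℂ) - (i : ℂ)) • B (α + β, i + j + 1)) :
    -- each `W^n` is a Lie ideal
    (∀ n : ℕ, ∀ (x y : W), y ∈ Wn Γ W B n → ⁅x, y⁆ ∈ Wn Γ W B n) ∧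
    -- every nonzero Lie ideal equals some `W^n`
    (∀ I : LieIdeal ℂ W, I ≠ ⊥ → ∃ n : ℕ, (I : Submodule ℂ W) = Wn Γ W B n) := by
  classical
  have hB : IsWBasis B := hB
  refine ⟨fun n x y hy => hB.lie_mem_Wn x hy, fun I hI => ?_⟩
  have : Nontrivial Γ := (AddSubgroup.nontrivial_iff_ne_bot Γ).2 hΓ
  obtain ⟨γ, N, hγN⟩ := hB.exists_basis_mem hI
  have hlevel : ∃ m, ∃ x ∈ I, ∃ α, B.repr x (α, m) ≠ 0 := ⟨N, _, hγN, γ, by simp⟩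
  obtain ⟨x, hxI, α, hα⟩ := Nat.find_spec hlevel
  have hIn : (I : Submodule ℂ W) ≤ Wn Γ W B (Nat.find hlevel) := fun y hy =>
    mem_Wn_iff.2 fun p hp => Nat.find_min' hlevel ⟨y, hy, p.1, Finsupp.mem_support_iff.1 hp⟩
  obtain ⟨δ, hδ⟩ := hB.exists_basis_mem_sup_Wn I hxI (hIn hxI) (mem_gradeSupportAt.2 hα)
  exact ⟨_, hIn.antisymm (Wn_le_of_forall_basis_mem_sup
    (hB.basis_mem_sup_Wn_of_basis_mem_sup I hδ) (hB.Wn_le_of_basis_mem I hγN))⟩
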